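/- arXiv:1709.09725 — 5 statements merged into one kernel-verified Lean document; each statement's English description precedes it below -/
import Mathlib

section
/- For odd ℓ ≥ 3, the word 1'·1·2·1'·3'·3·4·3'·5'·5·6·5'·⋯·(ℓ−2)'·(ℓ−2)·(ℓ−1)·(ℓ−2)'·ℓ'·ℓ·1·ℓ'·2'·2·3·2'·4'·4·5·4'·⋯·(ℓ−1)'·(ℓ−1)·ℓ·(ℓ−1)' represents the graph K^△_ℓ. -/
def Alternate {V : Type*} [DecidableEq V] (x y : V) (w : List V) : Prop :=
  (w.filter fun z => decide (z = x ∨ z = y)).Chain' (· ≠ ·)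

/-- `w` represents the graph `G`: every vertex occurs in `w`, and two distinct
vertices alternate in `w` iff they are adjacent in `G`. -/
def Represents {V : Type*} [DecidableEq V] (G : SimpleGraph V) (w : List V) : Prop :=
  (∀ v : V, v ∈ w) ∧ ∀ x y : V, x ≠ y → (G.Adj x y ↔ Alternate x y w)

def WordRepresentable {V : Type*} [DecidableEq V] (G : SimpleGraph V) : Prop :=
  ∃ w : List V, Represents G w

/-- The graph `K^△_ℓ` (zero-based): a clique on vertices `inl i`, `i : Fin ℓ`,
together with, for each `i : Fin ℓ`, a vertex `inr i` (the vertex `(i+1)'` of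
the paper) adjacent exactly to `inl i` and `inl ((i+1) mod ℓ)`. -/
def KTri (ℓ : ℕ) : SimpleGraph (Fin ℓ ⊕ Fin ℓ) :=
  SimpleGraph.fromRel fun a b =>
    match a, b with
    | .inl i, .inl j => i ≠ j
    | .inl i, .inr j => i.1 = j.1 ∨ i.1 = (j.1 + 1) % ℓ
    | _, _ => False

/-- The block `i' i j i'` used in the explicit word representing `K^△_ℓ`. -/
def triBlock {ℓ : ℕ} (i j : Fin ℓ) : List (Fin ℓ ⊕ Fin ℓ) :=
  [Sum.inr i, Sum.inl i, Sum.inl j, Sum.inr i]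

/-- For odd `ℓ = 2m+3`, the word
`1'121' 3'343' ⋯ (ℓ-2)'(ℓ-2)(ℓ-1)(ℓ-2)' ℓ'ℓ1ℓ' 2'232' ⋯ (ℓ-1)'(ℓ-1)ℓ(ℓ-1)'`
(here written zero-based: paper vertex `i` is `inl (i-1)`, `i'` is
`inr (i-1)`). -/
def triWord (m : ℕ) : List (Fin (2 * m + 3) ⊕ Fin (2 * m + 3)) :=
  ((List.range (m + 1)).flatMap fun t =>
    triBlock ⟨(2 * t) % (2 * m + 3), Nat.mod_lt _ (by omega)⟩
      ⟨(2 * t + 1) % (2 * m + 3), Nat.mod_lt _ (by omega)⟩) ++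
  triBlock ⟨2 * m + 2, by omega⟩ ⟨0, by omega⟩ ++
  ((List.range (m + 1)).flatMap fun t =>
    triBlock ⟨(2 * t + 1) % (2 * m + 3), Nat.mod_lt _ (by omega)⟩
      ⟨(2 * t + 2) % (2 * m + 3), Nat.mod_lt _ (by omega)⟩)

/-! The word is the concatenation of the blocks `v' v (v+1) v'`, with `v` running first
through the odd vertices and then through the even ones. Hence the primed letters come in
adjacent pairs `v' v'`, so no two primed vertices alternate; the unprimed letters read
`1 2 ⋯ ℓ 1 2 ⋯ ℓ`, so any two unprimed vertices alternate; and since `u` occurs exactly twice,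
it alternates with `v'` exactly when one of its occurrences lies between the two copies of `v'`,
i.e. when `u ∈ {v, v+1}`. -/

open List Sum

section Alternation

variable {V : Type*}

theorem isChain_ne_replicate_iff {x y : V} (hxy : x ≠ y) {a k b : ℕ} (h : a + k + b = 2) :
    (replicate a x ++ y :: replicate k x ++ y :: replicate b x).IsChain (· ≠ ·) ↔ k = 1 := by
  have ha : a ≤ 2 := by omega
  have hk : k ≤ 2 := by omega
  have hb : b ≤ 2 := by omega
  interval_cases a <;> interval_cases k <;> interval_cases b <;>
    simp_all [replicate, isChain_cons_cons, Ne.symm]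

variable [DecidableEq V]

theorem alternate_comm (x y : V) (w : List V) : Alternate x y w ↔ Alternate y x w := by
  simp only [Alternate, or_comm]

theorem filter_eq_or_eq_of_not_mem {x y : V} {l : List V} (hy : y ∉ l) :
    l.filter (fun z => decide (z = x ∨ z = y)) = l.filter (fun z => decide (z = x)) :=
  filter_congr fun z hz => by simp [ne_of_mem_of_not_mem hz hy]

theorem alternate_append_self {l : List V} (hl : l.Nodup) {x y : V} (hx : x ∈ l) (hy : y ∈ l)
    (hxy : x ≠ y) : Alternate x y (l ++ l) := by
  have hperm : (l.filter fun z => decide (z = x ∨ z = y)).Perm [x, y] :=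
    (perm_ext_iff_of_nodup (hl.filter _) (by simp [hxy])).2 fun z => by
      simp only [mem_filter, decide_eq_true_eq, mem_cons, not_mem_nil, or_false]
      exact ⟨And.right, by rintro (rfl | rfl) <;> simp [hx, hy]⟩
  obtain ⟨c, d, hcd⟩ := length_eq_two.1 hperm.length_eq
  have hne : c ≠ d := by
    have := hl.filter fun z => decide (z = x ∨ z = y)
    rw [hcd] at this
    simpa using this
  change List.IsChain _ _
  rw [filter_append, hcd]
  simp [isChain_cons_cons, hne, hne.symm]

end Alternation

def blockWord {n : ℕ} (σ : List (Fin n)) (f : Fin n → Fin n) : List (Fin n ⊕ Fin n) :=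
  σ.flatMap fun v => triBlock v (f v)

def leftWord {n : ℕ} (σ : List (Fin n)) (f : Fin n → Fin n) : List (Fin n) :=
  σ.flatMap fun v => [v, f v]

section BlockWord

variable {n : ℕ} {σ : List (Fin n)} {f : Fin n → Fin n}

theorem mem_blockWord (hσ : ∀ v, v ∈ σ) (z : Fin n ⊕ Fin n) : z ∈ blockWord σ f := by
  rcases z with v | v <;> exact mem_flatMap.2 ⟨v, hσ v, by simp [triBlock]⟩

theorem filter_elim_blockWord (p : Fin n → Bool) :
    (blockWord σ f).filter (Sum.elim p fun _ => false) = ((leftWord σ f).filter p).map inl := by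
  simp only [blockWord, leftWord, filter_flatMap, map_flatMap]
  exact flatMap_congr fun v _ => by simp [triBlock, filter_cons]; split_ifs <;> simp

theorem filter_inl_blockWord (a b : Fin n) :
    (blockWord σ f).filter (fun z => decide (z = inl a ∨ z = inl b)) =
      ((leftWord σ f).filter fun z => decide (z = a ∨ z = b)).map inl := by
  rw [← filter_elim_blockWord]
  congr 1
  funext z
  rcases z with z | z <;> simp

theorem alternate_inl_blockWord_iff (a b : Fin n) :
    Alternate (inl a) (inl b) (blockWord σ f) ↔ Alternate a b (leftWord σ f) := by
  change List.IsChain _ _ ↔ List.IsChain _ _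
  rw [filter_inl_blockWord, isChain_map]
  simp

theorem not_alternate_inr_blockWord {a : Fin n} (ha : a ∈ σ) (b : Fin n) :
    ¬ Alternate (inr a) (inr b) (blockWord σ f) := by
  obtain ⟨s, t, rfl⟩ := append_of_mem ha
  intro h
  have hblock : (triBlock a (f a)).filter (fun z => decide (z = inr a ∨ z = inr b)) =
      [inr a, inr a] := by
    simp [triBlock]
  have hinfix : [inr a, inr a] <:+: (blockWord (s ++ a :: t) f).filter
      (fun z => decide (z = inr a ∨ z = inr b)) := by
    simp only [blockWord, flatMap_append, flatMap_cons, filter_append, hblock]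
    exact ⟨_, _, append_assoc _ _ _⟩
  simpa using h.infix hinfix

theorem filter_inl_inr_blockWord {u v : Fin n} {s : List (Fin n)} (hv : v ∉ s) :
    (blockWord s f).filter (fun z => decide (z = inl u ∨ z = inr v)) =
      replicate ((leftWord s f).count u) (inl u) := by
  have hv' : inr v ∉ blockWord s f := by
    simp only [blockWord, mem_flatMap, triBlock, not_exists, not_and]
    intro c hc
    simp [(ne_of_mem_of_not_mem hc hv).symm]
  have hp : (fun z : Fin n ⊕ Fin n => decide (z = inl u)) =
      Sum.elim (fun z => decide (z = u)) fun _ => false := by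
    funext z
    rcases z with z | z <;> simp
  rw [filter_eq_or_eq_of_not_mem hv', hp, filter_elim_blockWord, filter_eq, map_replicate]

theorem alternate_inl_inr_blockWord_iff {u v : Fin n} (hσ : σ.Nodup) (hv : v ∈ σ)
    (hfv : f v ≠ v) (hu : (leftWord σ f).count u = 2) :
    Alternate (inl u) (inr v) (blockWord σ f) ↔ u = v ∨ u = f v := by
  obtain ⟨s, t, rfl⟩ := append_of_mem hv
  have hvst : v ∉ s ++ t := (nodup_cons.1 (nodup_middle.1 hσ)).1
  have hblock : (triBlock v (f v)).filter (fun z => decide (z = inl u ∨ z = inr v)) =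
      inr v :: replicate ([v, f v].count u) (inl u) ++ [inr v] := by
    by_cases h1 : v = u <;> by_cases h2 : f v = u <;> simp_all [triBlock]
  have hcount : (leftWord s f).count u + [v, f v].count u + (leftWord t f).count u = 2 := by
    rw [← hu]
    simp only [leftWord, flatMap_append, flatMap_cons, count_append]
    omega
  have hk : [v, f v].count u = 1 ↔ u = v ∨ u = f v := by
    simp only [count_cons, count_nil, beq_iff_eq]
    split_ifs <;> grind
  change List.IsChain _ _ ↔ _
  have hsplit :
      blockWord (s ++ v :: t) f = blockWord s f ++ triBlock v (f v) ++ blockWord t f := by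
    simp [blockWord]
  rw [hsplit, filter_append, filter_append,
    filter_inl_inr_blockWord fun h => hvst (mem_append_left t h),
    filter_inl_inr_blockWord fun h => hvst (mem_append_right s h), hblock, ← hk,
    ← isChain_ne_replicate_iff (x := inl u) (y := inr v) inl_ne_inr hcount]
  simp

end BlockWord

theorem kTri_adj_inl_inl {ℓ : ℕ} (i j : Fin ℓ) :
    (KTri ℓ).Adj (inl i) (inl j) ↔ i ≠ j := by
  simp +contextual [KTri]

theorem kTri_adj_inl_inr {ℓ : ℕ} [NeZero ℓ] (i j : Fin ℓ) :
    (KTri ℓ).Adj (inl i) (inr j) ↔ i = j ∨ i = j + 1 := by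
  simp [KTri, Fin.ext_iff, Fin.val_add]

theorem kTri_not_adj_inr_inr {ℓ : ℕ} (i j : Fin ℓ) : ¬ (KTri ℓ).Adj (inr i) (inr j) := by
  simp [KTri]

theorem flatMap_range_eq_map_range_two_mul (k c : ℕ) :
    (range k).flatMap (fun t => [2 * t + c, 2 * t + c + 1]) = (range (2 * k)).map (· + c) := by
  induction k with
  | zero => rfl
  | succ k ih =>
    rw [range_succ, flatMap_append, ih, show 2 * (k + 1) = 2 * k + 1 + 1 by ring, range_succ,
      range_succ]
    simp
    omega

def triBlockOrder (m : ℕ) : List (Fin (2 * m + 3)) :=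
  (List.range (m + 1)).map (fun t => ⟨(2 * t) % (2 * m + 3), Nat.mod_lt _ (by omega)⟩) ++
    ⟨2 * m + 2, by omega⟩ ::
      (List.range (m + 1)).map (fun t => ⟨(2 * t + 1) % (2 * m + 3), Nat.mod_lt _ (by omega)⟩)

theorem triWord_eq_blockWord (m : ℕ) : triWord m = blockWord (triBlockOrder m) (· + 1) := by
  have hsucc (k : ℕ) : (⟨k % (2 * m + 3), Nat.mod_lt _ (by omega)⟩ : Fin (2 * m + 3)) + 1 =
      ⟨(k + 1) % (2 * m + 3), Nat.mod_lt _ (by omega)⟩ := by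
    ext
    simp [Fin.val_add]
  have hlast : (⟨2 * m + 2, by omega⟩ : Fin (2 * m + 3)) + 1 = ⟨0, by omega⟩ := by
    ext
    simp [Fin.val_add]
  simp only [triWord, blockWord, triBlockOrder, flatMap_append, flatMap_cons, flatMap_map, hsucc,
    hlast, append_assoc]

theorem map_val_triBlockOrder (m : ℕ) : (triBlockOrder m).map Fin.val =
    (range (m + 1)).map (2 * ·) ++ (2 * m + 2) :: (range (m + 1)).map (2 * · + 1) := by
  simp only [triBlockOrder, map_append, map_cons, List.map_map]
  congr 1
  · refine map_congr_left fun t ht => Nat.mod_eq_of_lt ?_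
    simp at ht
    omega
  · congr 1
    refine map_congr_left fun t ht => Nat.mod_eq_of_lt ?_
    simp at ht
    omega

theorem triBlockOrder_nodup (m : ℕ) : (triBlockOrder m).Nodup := by
  refine Nodup.of_map Fin.val ?_
  rw [map_val_triBlockOrder]
  simp only [nodup_append, nodup_cons, mem_map, mem_range]
  refine ⟨nodup_range.map fun a b h => by simpa using h,
    ⟨?_, nodup_range.map fun a b h => ?_⟩, ?_⟩
  all_goals grind

theorem mem_triBlockOrder {m : ℕ} (v : Fin (2 * m + 3)) : v ∈ triBlockOrder m := by
  rw [← mem_map_of_injective Fin.val_injective, map_val_triBlockOrder]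
  rcases Nat.even_or_odd' v with ⟨k, hk | hk⟩ <;>
    simp only [mem_append, mem_cons, mem_map, mem_range]
  · by_cases hkm : k ≤ m
    · exact .inl ⟨k, by omega, hk.symm⟩
    · exact .inr (.inl (by omega))
  · exact .inr (.inr ⟨k, by omega, hk.symm⟩)

theorem map_val_leftWord_triBlockOrder (m : ℕ) :
    (leftWord (triBlockOrder m) (· + 1)).map Fin.val =
      range (2 * m + 2) ++ [2 * m + 2] ++ 0 :: (range (2 * m + 2)).map Nat.succ := by
  have heven : (range (m + 1)).flatMap (fun t => [2 * t, (2 * t + 1) % (2 * m + 3)]) =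
      (range (m + 1)).flatMap (fun t => [2 * t + 0, 2 * t + 0 + 1]) :=
    flatMap_congr fun t ht => by rw [mem_range] at ht; rw [Nat.mod_eq_of_lt (by omega)]; rfl
  have hodd : (range (m + 1)).flatMap (fun t => [2 * t + 1, (2 * t + 1 + 1) % (2 * m + 3)]) =
      (range (m + 1)).flatMap (fun t => [2 * t + 1, 2 * t + 1 + 1]) :=
    flatMap_congr fun t ht => by rw [mem_range] at ht; rw [Nat.mod_eq_of_lt (by omega)]
  calc (leftWord (triBlockOrder m) (· + 1)).map Fin.val
      = ((triBlockOrder m).map Fin.val).flatMap fun k => [k, (k + 1) % (2 * m + 3)] := by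
        simp [leftWord, map_flatMap, flatMap_map, Fin.val_add]
    _ = _ := by
        rw [map_val_triBlockOrder, flatMap_append, flatMap_cons, flatMap_map, flatMap_map, heven,
          hodd, flatMap_range_eq_map_range_two_mul, flatMap_range_eq_map_range_two_mul,
          show 2 * m + 2 + 1 = 2 * m + 3 by ring, Nat.mod_self, mul_add, mul_one]
        simp

theorem leftWord_triBlockOrder (m : ℕ) :
    leftWord (triBlockOrder m) (· + 1) = finRange (2 * m + 3) ++ finRange (2 * m + 3) := by
  apply map_injective_iff.2 Fin.val_injective
  rw [map_val_leftWord_triBlockOrder, ← range_succ, ← range_succ_eq_map, map_append,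
    map_coe_finRange_eq_range]

/-- For every odd `ℓ = 2m+3 ≥ 3`, the explicit word `triWord m` represents the
graph `K^△_ℓ`. -/
theorem triWord_represents (m : ℕ) :
    Represents (KTri (2 * m + 3)) (triWord m) := by
  have hcount (u : Fin (2 * m + 3)) : (leftWord (triBlockOrder m) (· + 1)).count u = 2 := by
    simp [leftWord_triBlockOrder]
  have hLR (i j : Fin (2 * m + 3)) : (KTri (2 * m + 3)).Adj (inl i) (inr j) ↔
      Alternate (inl i) (inr j) (blockWord (triBlockOrder m) (· + 1)) := by
    rw [kTri_adj_inl_inr, alternate_inl_inr_blockWord_iff (triBlockOrder_nodup m)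
      (mem_triBlockOrder j) (by simp) (hcount i)]
  rw [triWord_eq_blockWord]
  refine ⟨mem_blockWord mem_triBlockOrder, ?_⟩
  rintro (i | i) (j | j) hij
  · rw [kTri_adj_inl_inl, alternate_inl_blockWord_iff, leftWord_triBlockOrder]
    replace hij : i ≠ j := fun h => hij (congrArg inl h)
    exact iff_of_true hij (alternate_append_self (nodup_finRange _) (mem_finRange i)
      (mem_finRange j) hij)
  · exact hLR i j
  · rw [SimpleGraph.adj_comm, alternate_comm]
    exact hLR j i
  · exact iff_of_false (kTri_not_adj_inr_inr i j)
      (not_alternate_inr_blockWord (mem_triBlockOrder i) j)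
end

section
/- Let G be a semi-transitively oriented graph containing a transitively oriented clique with Hamiltonian directed path x_1→x_2→⋯→x_m, and let x be a vertex outside the clique adjacent only to clique vertices, with all edges between x and the clique oriented from the clique vertices toward x (x is a sink among its neighbours). Then the neighbours of x form a set of consecutive vertices x_i, x_{i+1}, …, x_j on the Hamiltonian path. -/
/-- `R` is an orientation of `G`: `R` holds only on edges, and each edge gets
exactly one direction. -/
def IsOrientation {V : Type*} (G : SimpleGraph V) (R : V → V → Prop) : Prop :=
  (∀ x y, R x y → G.Adj x y) ∧ ∀ x y, G.Adj x y → (R x y ↔ ¬ R y x)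

/-- `R` has no directed cycles. -/
def Acyclic {V : Type*} (R : V → V → Prop) : Prop :=
  ∀ v, ¬ Relation.TransGen R v v

/-- `R` is semi-transitive: acyclic, and every directed path `p 0 → ⋯ → p k`
whose endpoints are joined by the edge `p 0 → p k` is fully transitive. -/
def SemiTransitive {V : Type*} (R : V → V → Prop) : Prop :=
  Acyclic R ∧
  ∀ (k : ℕ) (p : Fin (k + 1) → V),
    (∀ i : Fin k, R (p i.castSucc) (p i.succ)) →
    R (p 0) (p (Fin.last k)) →
    ∀ i j : Fin (k + 1), i < j → R (p i) (p j)

/-- In a semi-transitively oriented graph containing a transitively oriented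
clique `c 0 → c 1 → ⋯` (with `c a → c b` iff `a < b`), if a vertex `x`
outside the clique is adjacent only to clique vertices, with all those edges
oriented into `x`, then the neighbours of `x` form a consecutive set of
vertices on the Hamiltonian path of the clique. -/
theorem sink_neighbours_consecutive {V : Type*} (G : SimpleGraph V)
    (R : V → V → Prop) (hor : IsOrientation G R) (hst : SemiTransitive R)
    {m : ℕ} (c : Fin m → V) (hc : Function.Injective c)
    (hclique : ∀ a b : Fin m, a ≠ b → G.Adj (c a) (c b))
    (horder : ∀ a b : Fin m, R (c a) (c b) ↔ a < b)
    (x : V) (hx : x ∉ Set.range c)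
    (hnbr : ∀ u : V, G.Adj x u → u ∈ Set.range c)
    (hsink : ∀ a : Fin m, G.Adj x (c a) → R (c a) x) :
    ∀ a k b : Fin m, a ≤ k → k ≤ b →
      G.Adj x (c a) → G.Adj x (c b) → G.Adj x (c k) := by
  intro a k b hak hkb ha hb
  rcases eq_or_lt_of_le hak with rfl | hak
  · exact ha
  rcases eq_or_lt_of_le hkb with rfl | hkb
  · exact hb
  have hRa : R (c a) x := hsink a ha
  have hRb : R (c b) x := hsink b hb
  set p : Fin 4 → V := ![c a, c k, c b, x] with hp
  have hpath : ∀ i : Fin 3, R (p i.castSucc) (p i.succ) := by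
    intro i
    fin_cases i
    · exact (horder a k).mpr hak
    · exact (horder k b).mpr hkb
    · exact hRb
  have h03 : R (p 0) (p (Fin.last 3)) := hRa
  have := hst.2 3 p hpath h03 1 3 (by decide)
  exact ((hor.1 _ _ this).symm)
end

section
/- Let G be a semi-transitively oriented graph containing a transitively oriented clique with Hamiltonian path x_1→x_2→⋯→x_m, and let x be a vertex outside the clique adjacent only to clique vertices, such that some edges are oriented into x and some out of x. Then x is adjacent to both x_1 and x_m, and there is an index s such that the in-neighbours of x are exactly {x_1,…,x_s}, a consecutive initial segment of the path, and the out-neighbours of x form a consecutive final segment of the path; in particular x_1→x and x→x_m are edges. -/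
/-- In a semi-transitively oriented graph containing a transitively oriented
clique `c 0 → c 1 → ⋯ → c m` (with `c a → c b` iff `a < b`), if a vertex
`x` outside the clique is adjacent only to clique vertices and has both an
in-neighbour and an out-neighbour among them, then `x` is adjacent to both the
source `c 0` and the sink `c (last m)` of the path, with `c 0 → x` and
`x → c (last m)`, its in-neighbours form a consecutive initial segment of the
path, and its out-neighbours a consecutive final segment. -/
theorem typeC_segments {V : Type*} (G : SimpleGraph V)
    (R : V → V → Prop) (hor : IsOrientation G R) (hst : SemiTransitive R)
    {m : ℕ} (c : Fin (m + 1) → V) (hc : Function.Injective c)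
    (hclique : ∀ a b : Fin (m + 1), a ≠ b → G.Adj (c a) (c b))
    (horder : ∀ a b : Fin (m + 1), R (c a) (c b) ↔ a < b)
    (x : V) (hx : x ∉ Set.range c)
    (hnbr : ∀ u : V, G.Adj x u → u ∈ Set.range c)
    (hin : ∃ a : Fin (m + 1), R (c a) x)
    (hout : ∃ b : Fin (m + 1), R x (c b)) :
    G.Adj x (c 0) ∧ G.Adj x (c (Fin.last m)) ∧
    R (c 0) x ∧ R x (c (Fin.last m)) ∧
    ∃ s t : Fin (m + 1), s < t ∧
      (∀ a : Fin (m + 1), R (c a) x ↔ a ≤ s) ∧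
      (∀ a : Fin (m + 1), R x (c a) ↔ t ≤ a) := by
  classical
  obtain ⟨hR, hRiff⟩ := hor
  obtain ⟨hacyc, hsemi⟩ := hst
  have hAB : ∀ a b : Fin (m+1), R (c a) x → R x (c b) → a < b := by
    intro a b ha hb
    by_contra h
    push_neg at h
    rcases lt_or_eq_of_le h with h | h
    · exact hacyc x (Relation.TransGen.head hb (Relation.TransGen.head
        ((horder b a).mpr h) (Relation.TransGen.single ha)))
    · subst h
      exact hacyc x (Relation.TransGen.head hb (Relation.TransGen.single ha))
  have hB : ∀ a b a' : Fin (m+1), R (c a) x → R x (c b) → a' < a → R (c a') x := by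
    intro a b a' ha hb h
    have hab := hAB a b ha hb
    have key := hsemi 3 ![c a', c a, x, c b] ?_ ?_ 0 2 (by decide)
    · simpa using key
    · intro i
      fin_cases i
      · simpa using (horder a' a).mpr h
      · simpa using ha
      · simpa using hb
    · simpa using (horder a' b).mpr (h.trans hab)
  have hC : ∀ a b b' : Fin (m+1), R (c a) x → R x (c b) → b < b' → R x (c b') := by
    intro a b b' ha hb h
    have hab := hAB a b ha hb
    have key := hsemi 3 ![c a, x, c b, c b'] ?_ ?_ 1 3 (by decide)
    · simpa using key
    · intro i
      fin_cases i
      · simpa using ha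
      · simpa using hb
      · simpa using (horder b b').mpr h
    · simpa using (horder a b').mpr (hab.trans h)
  obtain ⟨a0, ha0⟩ := hin
  obtain ⟨b0, hb0⟩ := hout
  set S : Finset (Fin (m+1)) := Finset.univ.filter (fun a => R (c a) x) with hS
  set T : Finset (Fin (m+1)) := Finset.univ.filter (fun a => R x (c a)) with hT
  have hSne : S.Nonempty := ⟨a0, by simp [hS, ha0]⟩
  have hTne : T.Nonempty := ⟨b0, by simp [hT, hb0]⟩
  set s := S.max' hSne with hsdef
  set t := T.min' hTne with htdef
  have hs : R (c s) x := by have := S.max'_mem hSne; simpa [hS] using this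
  have ht : R x (c t) := by have := T.min'_mem hTne; simpa [hT] using this
  have hsle : ∀ a, R (c a) x → a ≤ s := fun a ha => S.le_max' a (by simp [hS, ha])
  have htle : ∀ a, R x (c a) → t ≤ a := fun a ha => T.min'_le a (by simp [hT, ha])
  have hst' : s < t := hAB s t hs ht
  have hinseg : ∀ a : Fin (m+1), R (c a) x ↔ a ≤ s := by
    intro a
    constructor
    · exact hsle a
    · intro hle
      rcases lt_or_eq_of_le hle with h | h
      · exact hB s t a hs ht h
      · subst h; exact hs
  have houtseg : ∀ a : Fin (m+1), R x (c a) ↔ t ≤ a := by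
    intro a
    constructor
    · exact htle a
    · intro hle
      rcases lt_or_eq_of_le hle with h | h
      · exact hC s t a hs ht h
      · rw [← h]; exact ht
  have h0 : R (c 0) x := (hinseg 0).mpr (Fin.zero_le s)
  have hlast : R x (c (Fin.last m)) := (houtseg _).mpr (Fin.le_last t)
  exact ⟨(hR _ _ h0).symm, hR _ _ hlast, h0, hlast, s, t, hst', hinseg, houtseg⟩
end

section
/- Let S be a split graph with independent part E and clique part K, endowed with a semi-transitive orientation, and let x ∈ E be a vertex of type C with last in-neighbour x_s and first out-neighbour x_{s+1} on the Hamiltonian path of K (so x_s→x and x→x_{s+1}). Then no vertex y ∈ E that is a pure sink (type A) or pure source (type B) with respect to K can be adjacent to both x_s and x_{s+1}. -/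
/-- Let a split graph (clique enumerated by `c` along the Hamiltonian path,
independent set = vertices outside the clique) be semi-transitively oriented.
If `x` in the independent set is of type C with last in-neighbour `c s` and
first out-neighbour `c t` (so `c s → x` and `x → c t`), then no vertex `y`
of the independent set that is a pure sink (type A) or a pure source (type B)
with respect to the clique can be adjacent to both `c s` and `c t`. -/
theorem typeC_break_pair_not_covered {V : Type*} (G : SimpleGraph V)
    (R : V → V → Prop) (hor : IsOrientation G R) (hst : SemiTransitive R)
    {m : ℕ} (c : Fin m → V) (hc : Function.Injective c)
    (hclique : ∀ a b : Fin m, a ≠ b → G.Adj (c a) (c b))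
    (horder : ∀ a b : Fin m, R (c a) (c b) ↔ a < b)
    -- the independent-set vertex x of type C and its break pair
    (x : V) (hx : x ∉ Set.range c)
    (hxnbr : ∀ u : V, G.Adj x u → u ∈ Set.range c)
    (s t : Fin m) (hstlt : s < t)
    (hins : R (c s) x) (hlast : ∀ a : Fin m, R (c a) x → a ≤ s)
    (houtt : R x (c t)) (hfirst : ∀ a : Fin m, R x (c a) → t ≤ a)
    -- another independent-set vertex y
    (y : V) (hy : y ∉ Set.range c) (hyx : y ≠ x) (hynadj : ¬ G.Adj x y)
    (hynbr : ∀ u : V, G.Adj y u → u ∈ Set.range c)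
    (hAB : (∀ a : Fin m, G.Adj y (c a) → R (c a) y) ∨
           (∀ a : Fin m, G.Adj y (c a) → R y (c a))) :
    ¬ (G.Adj y (c s) ∧ G.Adj y (c t)) := by
  rintro ⟨h1, h2⟩
  rcases hAB with hA | hB
  · -- path c s → x → c t → y, shortcut c s → y forces R x y
    have hRsy : R (c s) y := hA s h1
    have hRty : R (c t) y := hA t h2
    have := hst.2 3 ![c s, x, c t, y]
      (by
        intro i
        fin_cases i
        · exact hins
        · exact houtt
        · exact hRty)
      (by simpa [Fin.last] using hRsy)
      1 3 (by decide)
    exact hynadj (hor.1 x y (by simpa using this))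
  · -- path y → c s → x → c t, shortcut y → c t forces R y x
    have hRys : R y (c s) := hB s h1
    have hRyt : R y (c t) := hB t h2
    have := hst.2 3 ![y, c s, x, c t]
      (by
        intro i
        fin_cases i
        · exact hRys
        · exact hins
        · exact houtt)
      (by simpa [Fin.last] using hRyt)
      0 2 (by decide)
    exact hynadj ((hor.1 y x (by simpa using this)).symm)
end

section
/- Let S be a split graph with independent part E and clique part K endowed with a semi-transitive orientation, and let x ∈ E be a vertex of type A (all edges to K oriented into x). Reversing all edges incident to x (making x a type B vertex, a source) yields again a semi-transitive orientation of S. The same holds for changing a type B vertex into a type A vertex. -/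
/-!
Flipping a sink `x` into a source changes no edge away from `x`. A directed path of the
flipped orientation can visit the source `x` only at its start, so a shortcut path
`x → p 1 → ⋯ → p k` with edge `x → p k` becomes, after moving `x` to the end, the path
`p 1 → ⋯ → p k → x` of the original orientation with edge `p 1 → x`; semi-transitivity of
the original orientation then gives all edges needed. Flipping a source into a sink is the
same statement for the reversed orientation.
-/

section Flip

variable {V : Type*} {R : V → V → Prop}

def flipAt (R : V → V → Prop) (x : V) (a b : V) : Prop :=
  ((a = x ∨ b = x) ∧ R b a) ∨ ((a ≠ x ∧ b ≠ x) ∧ R a b)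

theorem flipAt_of_ne {x a b : V} (ha : a ≠ x) (hb : b ≠ x) : flipAt R x a b ↔ R a b := by
  simp [flipAt, ha, hb]

@[simp]
theorem flipAt_left {x b : V} : flipAt R x x b ↔ R b x := by
  simp [flipAt]

theorem flip_flipAt_flip (x : V) : flip (flipAt (flip R) x) = flipAt R x := by
  funext a b
  simp only [flip, flipAt, or_comm, and_comm]

theorem IsOrientation.flipAt {G : SimpleGraph V} (hR : IsOrientation G R) (x : V) :
    IsOrientation G (flipAt R x) := by
  refine ⟨?_, fun a b hab => ?_⟩
  · rintro a b (⟨_, h⟩ | ⟨_, h⟩)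
    · exact (hR.1 b a h).symm
    · exact hR.1 a b h
  · have hab_iff := hR.2 a b hab
    have hba_iff := hR.2 b a hab.symm
    unfold _root_.flipAt
    by_cases ha : a = x <;> by_cases hb : b = x <;> tauto

theorem IsOrientation.asymm {G : SimpleGraph V} (hR : IsOrientation G R) {a b : V}
    (hab : R a b) : ¬ R b a :=
  (hR.2 a b (hR.1 a b hab)).1 hab

theorem Acyclic.flip (h : Acyclic R) : Acyclic (flip R) :=
  fun v hv => h v (Relation.transGen_swap.mp hv)

theorem SemiTransitive.flip (h : SemiTransitive R) : SemiTransitive (flip R) := by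
  refine ⟨h.1.flip, fun k p hpath hshort i j hij => ?_⟩
  have hpath_rev : ∀ m : Fin k, R (p m.castSucc.rev) (p m.succ.rev) := by
    intro m
    simpa [_root_.flip, Fin.rev_succ, Fin.rev_castSucc] using hpath m.rev
  simpa [_root_.flip] using h.2 k (p ∘ Fin.rev) hpath_rev
    (by simpa [_root_.flip] using hshort) j.rev i.rev (Fin.rev_lt_rev.mpr hij)

theorem SemiTransitive.of_snoc (h : SemiTransitive R) {n : ℕ} {p : Fin (n + 1) → V} {y : V}
    (hpath : ∀ i : Fin n, R (p i.castSucc) (p i.succ)) (hlast : R (p (Fin.last n)) y)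
    (hshort : R (p 0) y) :
    (∀ i j, i < j → R (p i) (p j)) ∧ ∀ i, R (p i) y := by
  have hsnoc := h.2 (n + 1) (Fin.snoc p y) (fun i => ?_) (by simpa using hshort)
  · refine ⟨fun i j hij => ?_, fun i => ?_⟩
    · simpa using hsnoc i.castSucc j.castSucc (Fin.castSucc_lt_castSucc_iff.mpr hij)
    · simpa using hsnoc i.castSucc (Fin.last _) (Fin.castSucc_lt_last i)
  · induction i using Fin.lastCases with
    | last => simpa using hlast
    | cast c =>
      rw [Fin.succ_castSucc, Fin.snoc_castSucc, Fin.snoc_castSucc]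
      exact hpath c

section Sink

variable {x : V} (hsink : ∀ u, ¬ R x u)
include hsink

theorem ne_of_flipAt_of_sink {a b : V} (hab : flipAt R x a b) : b ≠ x := by
  rintro rfl
  rcases hab with ⟨_, hxa⟩ | ⟨⟨_, hxx⟩, _⟩
  exacts [hsink a hxa, hxx rfl]

theorem rel_of_flipAt_of_sink {a b : V} (ha : a ≠ x) (hab : flipAt R x a b) : R a b :=
  (flipAt_of_ne ha (ne_of_flipAt_of_sink hsink hab)).1 hab

theorem Acyclic.flipAt_of_sink (h : Acyclic R) : Acyclic (flipAt R x) := by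
  have hreach : ∀ v w, Relation.TransGen (flipAt R x) v w →
      w ≠ x ∧ (v ≠ x → Relation.TransGen R v w) := by
    intro v w hvw
    induction hvw with
    | single hvb =>
      exact ⟨ne_of_flipAt_of_sink hsink hvb,
        fun hv => .single (rel_of_flipAt_of_sink hsink hv hvb)⟩
    | tail _ hbc ih =>
      exact ⟨ne_of_flipAt_of_sink hsink hbc,
        fun hv => (ih.2 hv).tail (rel_of_flipAt_of_sink hsink ih.1 hbc)⟩
  intro v hv
  by_cases hvx : v = x
  · exact (hreach v v hv).1 hvx
  · exact h v ((hreach v v hv).2 hvx)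

theorem SemiTransitive.flipAt_of_sink (h : SemiTransitive R) :
    SemiTransitive (flipAt R x) := by
  refine ⟨h.1.flipAt_of_sink hsink, fun k p hpath hshort i j hij => ?_⟩
  have hne : ∀ m : Fin k, p m.succ ≠ x := fun m => ne_of_flipAt_of_sink hsink (hpath m)
  rcases ne_or_eq (p 0) x with hp0 | hp0
  · have hne' : ∀ t, p t ≠ x := fun t => Fin.cases hp0 hne t
    exact (flipAt_of_ne (hne' i) (hne' j)).2 <|
      h.2 k p (fun m => rel_of_flipAt_of_sink hsink (hne' _) (hpath m))
        (rel_of_flipAt_of_sink hsink hp0 hshort) i j hij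
  cases k with
  | zero => exact absurd (Fin.lt_def.mp hij) (by omega)
  | succ n =>
    obtain ⟨hrel, hto⟩ := h.of_snoc (p := Fin.tail p) (y := x)
      (fun m => by
        have hstep := hpath m.succ
        rw [← Fin.succ_castSucc] at hstep
        exact rel_of_flipAt_of_sink hsink (hne m.castSucc) hstep)
      (by simpa [Fin.tail, hp0] using hshort)
      (by simpa [Fin.tail, hp0] using hpath 0)
    induction i using Fin.cases with
    | zero =>
      induction j using Fin.cases with
      | zero => exact absurd hij (lt_irrefl 0)
      | succ b =>
        rw [hp0, flipAt_left]
        exact hto b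
    | succ a =>
      induction j using Fin.cases with
      | zero => exact absurd hij (Fin.not_lt_zero _)
      | succ b =>
        exact (flipAt_of_ne (hne a) (hne b)).2 (hrel a b (Fin.succ_lt_succ_iff.mp hij))

end Sink

end Flip

theorem flip_type_A_B_general {V : Type*} (G : SimpleGraph V)
    (R : V → V → Prop) (hor : IsOrientation G R) (hst : SemiTransitive R)
    (x : V)
    (hAB : (∀ u : V, G.Adj x u → R u x) ∨ (∀ u : V, G.Adj x u → R x u)) :
    IsOrientation G
      (fun a b => ((a = x ∨ b = x) ∧ R b a) ∨ ((a ≠ x ∧ b ≠ x) ∧ R a b)) ∧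
    SemiTransitive
      (fun a b => ((a = x ∨ b = x) ∧ R b a) ∨ ((a ≠ x ∧ b ≠ x) ∧ R a b)) := by
  show IsOrientation G (flipAt R x) ∧ SemiTransitive (flipAt R x)
  refine ⟨hor.flipAt x, ?_⟩
  rcases hAB with hA | hB
  · have hsink : ∀ u, ¬ R x u := fun u hxu => hor.asymm hxu (hA u (hor.1 x u hxu))
    exact hst.flipAt_of_sink hsink
  · have hsource : ∀ u, ¬ flip R x u := fun u hux =>
      hor.asymm hux (hB u (hor.1 u x hux).symm)
    rw [← flip_flipAt_flip (R := R) x]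
    exact (hst.flip.flipAt_of_sink hsource).flip

/-- In a semi-transitively oriented split graph (clique `K`, independent set
its complement), reversing all edges at a vertex `x` of the independent set
which is a pure sink (type A) or a pure source (type B) yields again a
semi-transitive orientation: type A vertices can be turned into type B vertices
and vice versa. -/
theorem flip_type_A_B {V : Type*} (G : SimpleGraph V) (K : Set V)
    (hclique : ∀ u ∈ K, ∀ v ∈ K, u ≠ v → G.Adj u v)
    (hind : ∀ u ∉ K, ∀ v ∉ K, ¬ G.Adj u v)
    (R : V → V → Prop) (hor : IsOrientation G R) (hst : SemiTransitive R)
    (x : V) (hx : x ∉ K)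
    (hAB : (∀ u : V, G.Adj x u → R u x) ∨ (∀ u : V, G.Adj x u → R x u)) :
    IsOrientation G
      (fun a b => ((a = x ∨ b = x) ∧ R b a) ∨ ((a ≠ x ∧ b ≠ x) ∧ R a b)) ∧
    SemiTransitive
      (fun a b => ((a = x ∨ b = x) ∧ R b a) ∨ ((a ≠ x ∧ b ≠ x) ∧ R a b)) :=
  flip_type_A_B_general G R hor hst x hAB
end
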